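/- The symmetry group of the unit P-simplex acts transitively on its vertices: for any indices i, j with 1 ≤ i, j ≤ P+1, there exists a linear isometry R of ℝ^P and a permutation σ of {1, …, P+1} such that R(v_k) = v_{σ(k)} for every k and σ(i) = j. -/

import Mathlib

open scoped BigOperators

/-- The all-ones vector in `ℝ^P`. -/
noncomputable def onesVec (P : ℕ) : EuclideanSpace ℝ (Fin P) :=
  (WithLp.equiv 2 (Fin P → ℝ)).symm fun _ => 1

/-- The vertices of the unit `P`-simplex: for `j < P`,
`v_j = √((P+1)/P) • e_j − ((√(P+1) − 1)/(P√P)) • 𝟏`, and `v_{P+1} = −(1/√P) • 𝟏`. -/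
noncomputable def simplexVertex (P : ℕ) (j : Fin (P + 1)) : EuclideanSpace ℝ (Fin P) :=
  if h : (j : ℕ) < P then
    Real.sqrt ((P + 1) / P) • EuclideanSpace.single ⟨(j : ℕ), h⟩ (1 : ℝ)
      - ((Real.sqrt (P + 1) - 1) / (P * Real.sqrt P)) • onesVec P
  else
    (-1 / Real.sqrt P) • onesVec P

/-!
The vertices have Gram matrix `1` on the diagonal and `-1/P` off it. So `v i` and `v j` have the
same norm, and the reflection in the hyperplane orthogonal to `v i - v j` exchanges them; every
other vertex `v k` lies in that hyperplane because `⟪v k, v i⟫ = ⟪v k, v j⟫`, so it is fixed.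
-/

open scoped RealInnerProductSpace
open Submodule

theorem exists_linearIsometryEquiv_apply_eq_comp_swap {ι E : Type*} [DecidableEq ι]
    [NormedAddCommGroup E] [InnerProductSpace ℝ E] (v : ι → E) {c d : ℝ}
    (hv : ∀ a b, ⟪v a, v b⟫ = if a = b then c else d) (i j : ι) :
    ∃ R : E ≃ₗᵢ[ℝ] E, ∀ k, R (v k) = v (Equiv.swap i j k) := by
  have hnorm : ∀ a b, ‖v a‖ = ‖v b‖ := fun a b => by
    rw [norm_eq_sqrt_real_inner, norm_eq_sqrt_real_inner, hv, hv, if_pos rfl, if_pos rfl]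
  set R := reflection (ℝ ∙ (v i - v j))ᗮ
  have hRi : R (v i) = v j := reflection_sub (hnorm i j)
  refine ⟨R, fun k => ?_⟩
  rcases eq_or_ne k i with rfl | hki
  · rw [Equiv.swap_apply_left, hRi]
  rcases eq_or_ne k j with rfl | hkj
  · rw [Equiv.swap_apply_right, ← hRi, reflection_reflection]
  rw [Equiv.swap_apply_of_ne_of_ne hki hkj]
  apply reflection_mem_subspace_eq_self
  rw [mem_orthogonal_singleton_iff_inner_left, inner_sub_right, hv, hv, if_neg hki, if_neg hkj,
    sub_self]

section SimplexVertex

variable {P : ℕ}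

@[simp]
lemma onesVec_apply (a : Fin P) : onesVec P a = 1 := rfl

lemma inner_onesVec_self : ⟪onesVec P, onesVec P⟫ = P := by
  simp [onesVec, EuclideanSpace.norm_eq]

lemma inner_single_onesVec (a : Fin P) : ⟪EuclideanSpace.single a (1 : ℝ), onesVec P⟫ = 1 := by
  simp [EuclideanSpace.inner_single_left]

lemma inner_smul_single_sub_smul_onesVec (α β : ℝ) (a b : Fin P) :
    ⟪α • EuclideanSpace.single a (1 : ℝ) - β • onesVec P,
      α • EuclideanSpace.single b (1 : ℝ) - β • onesVec P⟫
      = (if a = b then α ^ 2 else 0) - 2 * α * β + P * β ^ 2 := by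
  simp only [inner_sub_left, inner_sub_right, real_inner_smul_left, real_inner_smul_right,
    orthonormal_iff_ite.mp EuclideanSpace.orthonormal_single, inner_single_onesVec,
    real_inner_comm (EuclideanSpace.single _ (1 : ℝ)) (onesVec P), inner_onesVec_self]
  split_ifs <;> ring

lemma inner_smul_single_sub_smul_onesVec_smul_onesVec (α β γ : ℝ) (a : Fin P) :
    ⟪α • EuclideanSpace.single a (1 : ℝ) - β • onesVec P, γ • onesVec P⟫ = γ * (α - P * β) := by
  simp only [inner_sub_left, real_inner_smul_left, real_inner_smul_right, inner_single_onesVec,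
    inner_onesVec_self]
  ring

lemma simplexVertex_castSucc (a : Fin P) :
    simplexVertex P a.castSucc = Real.sqrt ((P + 1) / P) • EuclideanSpace.single a (1 : ℝ)
      - ((Real.sqrt (P + 1) - 1) / (P * Real.sqrt P)) • onesVec P := by
  simp [simplexVertex]

lemma simplexVertex_last : simplexVertex P (Fin.last P) = (-1 / Real.sqrt P) • onesVec P := by
  simp [simplexVertex]

theorem inner_simplexVertex (hP : 1 ≤ P) (a b : Fin (P + 1)) :
    ⟪simplexVertex P a, simplexVertex P b⟫ = if a = b then 1 else -1 / (P : ℝ) := by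
  have hP0 : (0 : ℝ) < P := by exact_mod_cast hP
  have hs : Real.sqrt P ^ 2 = P := Real.sq_sqrt hP0.le
  have ht : Real.sqrt (P + 1) ^ 2 = P + 1 := Real.sq_sqrt (by positivity)
  have hα : Real.sqrt ((P + 1) / P) = Real.sqrt (P + 1) / Real.sqrt P :=
    Real.sqrt_div (by positivity) _
  induction a using Fin.lastCases <;> induction b using Fin.lastCases
  case last.last =>
    rw [simplexVertex_last, if_pos rfl, real_inner_smul_left, real_inner_smul_right,
      inner_onesVec_self]
    field_simp
    linear_combination -hs
  case last.cast b =>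
    rw [simplexVertex_last, simplexVertex_castSucc, real_inner_comm,
      inner_smul_single_sub_smul_onesVec_smul_onesVec, if_neg (Fin.castSucc_ne_last b).symm, hα]
    field_simp
    linear_combination hs
  case cast.last a =>
    rw [simplexVertex_last, simplexVertex_castSucc,
      inner_smul_single_sub_smul_onesVec_smul_onesVec, if_neg (Fin.castSucc_ne_last a), hα]
    field_simp
    linear_combination hs
  case cast.cast a b =>
    rw [simplexVertex_castSucc, simplexVertex_castSucc, inner_smul_single_sub_smul_onesVec, hα]
    simp only [Fin.castSucc_inj]
    split_ifs
    · field_simp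
      linear_combination (P - 1 : ℝ) * ht - P * hs
    · field_simp
      linear_combination hs - ht

end SimplexVertex

/-- The symmetry group of the unit `P`-simplex acts transitively on its vertices: for any
`i, j` there is a linear isometry `R` of `ℝ^P` and a permutation `σ` of the indices with
`R(v_k) = v_{σ(k)}` for all `k` and `σ(i) = j`. -/
theorem simplex_symmetry_transitive (P : ℕ) (hP : 1 ≤ P) (i j : Fin (P + 1)) :
    ∃ (R : EuclideanSpace ℝ (Fin P) ≃ₗᵢ[ℝ] EuclideanSpace ℝ (Fin P))
      (σ : Equiv.Perm (Fin (P + 1))),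
      (∀ k : Fin (P + 1), R (simplexVertex P k) = simplexVertex P (σ k)) ∧ σ i = j := by
  obtain ⟨R, hR⟩ :=
    exists_linearIsometryEquiv_apply_eq_comp_swap (simplexVertex P) (inner_simplexVertex hP) i j
  exact ⟨R, Equiv.swap i j, hR, Equiv.swap_apply_left i j⟩
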